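/- arXiv:2505.03944 — 2 statements merged into one kernel-verified Lean document; each statement's English description precedes it below -/
import Mathlib

section
/- Let n ≥ 1, let 0 < λ ≤ Λ, and let F : Sym(n) → ℝ satisfy F(0) = 0 and the uniform ellipticity condition λ‖N‖ ≤ F(M + N) − F(M) ≤ Λ‖N‖ for all M ∈ Sym(n) and all positive semidefinite N ∈ Sym(n), where ‖·‖ denotes the operator norm. Assume that for every X ∈ Sym(n) the recession limit F♯(X) := lim_{τ→0⁺} τ·F(τ⁻¹X) exists. Then for every ε > 0 there exists τ₀ > 0 (depending on λ, Λ, ε and F) such that for every τ ∈ (0, τ₀) and every X ∈ Sym(n), |τ·F(τ⁻¹X) − F♯(X)| ≤ ε·(1 + ‖X‖). -/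
open Filter Topology

/-- The operator norm of an `n × n` real matrix, viewed as a linear operator on
Euclidean space `ℝⁿ`. -/
noncomputable def opNorm {n : ℕ} (M : Matrix (Fin n) (Fin n) ℝ) : ℝ :=
  ‖LinearMap.toContinuousLinearMap (Matrix.toEuclideanLin M)‖

noncomputable def matE (n : ℕ) : Matrix (Fin n) (Fin n) ℝ ≃ₗ[ℝ]
    (EuclideanSpace ℝ (Fin n) →L[ℝ] EuclideanSpace ℝ (Fin n)) :=
  Matrix.toEuclideanLin.trans LinearMap.toContinuousLinearMap

lemma opNorm_eq {n : ℕ} (M : Matrix (Fin n) (Fin n) ℝ) : opNorm M = ‖matE n M‖ := rfl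

lemma matE_apply {n : ℕ} (M : Matrix (Fin n) (Fin n) ℝ) (v : EuclideanSpace ℝ (Fin n)) :
    matE n M v = (WithLp.equiv 2 (Fin n → ℝ)).symm (M.mulVec ((WithLp.equiv 2 (Fin n → ℝ)) v)) := by
  simp [matE, Matrix.toEuclideanLin_apply]

lemma dot_bound {n : ℕ} (D : Matrix (Fin n) (Fin n) ℝ) (x : Fin n → ℝ) :
    |dotProduct x (D.mulVec x)| ≤ opNorm D * dotProduct x x := by
  set x' : EuclideanSpace ℝ (Fin n) := (WithLp.equiv 2 (Fin n → ℝ)).symm x with hx'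
  have hxx : (WithLp.equiv 2 (Fin n → ℝ)) x' = x := rfl
  have h1 : dotProduct x (D.mulVec x) = inner ℝ x' (matE n D x') := by
    rw [matE_apply, hxx]
    simp [PiLp.inner_apply, dotProduct, hx', WithLp.equiv, mul_comm, Equiv.refl]
  have h2 : dotProduct x x = ‖x'‖ ^ 2 := by
    rw [← real_inner_self_eq_norm_sq]
    simp [PiLp.inner_apply, dotProduct, hx', WithLp.equiv, Equiv.refl]
    rw [EuclideanSpace.norm_eq, Real.sq_sqrt (by positivity)]
    simp [sq]
  rw [h1, h2]
  calc |inner ℝ x' (matE n D x')| ≤ ‖x'‖ * ‖matE n D x'‖ := abs_real_inner_le_norm _ _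
    _ ≤ ‖x'‖ * (‖matE n D‖ * ‖x'‖) := by
        gcongr; exact ContinuousLinearMap.le_opNorm _ _
    _ = opNorm D * ‖x'‖ ^ 2 := by rw [opNorm_eq]; ring

lemma opNorm_nonneg' {n : ℕ} (M : Matrix (Fin n) (Fin n) ℝ) : 0 ≤ opNorm M := norm_nonneg _

lemma herm_smul_one {n : ℕ} (c : ℝ) :
    (c • (1 : Matrix (Fin n) (Fin n) ℝ)).IsHermitian := by
  simp [Matrix.IsHermitian, Matrix.conjTranspose_smul]

lemma dotProduct_self_nonneg {n : ℕ} (x : Fin n → ℝ) : (0:ℝ) ≤ dotProduct x x :=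
  Finset.sum_nonneg fun i _ => mul_self_nonneg _

lemma psd_smul_one {n : ℕ} {c : ℝ} (hc : 0 ≤ c) :
    (c • (1 : Matrix (Fin n) (Fin n) ℝ)).PosSemidef := by
  refine Matrix.PosSemidef.of_dotProduct_mulVec_nonneg (herm_smul_one c) fun x => ?_
  have hs : star x = x := by simp
  rw [hs, Matrix.smul_mulVec, Matrix.one_mulVec, dotProduct_smul, smul_eq_mul]
  exact mul_nonneg hc (dotProduct_self_nonneg x)

lemma psd_add_opNorm_one {n : ℕ} {D : Matrix (Fin n) (Fin n) ℝ} (hD : D.IsSymm) :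
    (D + opNorm D • (1 : Matrix (Fin n) (Fin n) ℝ)).PosSemidef := by
  refine Matrix.PosSemidef.of_dotProduct_mulVec_nonneg ((hD : D.IsHermitian).add (herm_smul_one _)) fun x => ?_
  have hs : star x = x := by simp
  rw [hs, Matrix.add_mulVec, dotProduct_add, Matrix.smul_mulVec,
    Matrix.one_mulVec, dotProduct_smul, smul_eq_mul]
  have h1 := dot_bound D x
  linarith [(abs_le.mp h1).1]

lemma opNorm_smul {n : ℕ} (c : ℝ) (M : Matrix (Fin n) (Fin n) ℝ) :
    opNorm (c • M) = |c| * opNorm M := by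
  rw [opNorm_eq, opNorm_eq, map_smul]
  rw [show ‖c • matE n M‖ = ‖c‖ * ‖matE n M‖ from
    norm_smul (β := EuclideanSpace ℝ (Fin n) →L[ℝ] EuclideanSpace ℝ (Fin n)) c _, Real.norm_eq_abs]

lemma opNorm_add_le {n : ℕ} (M N : Matrix (Fin n) (Fin n) ℝ) :
    opNorm (M + N) ≤ opNorm M + opNorm N := by
  rw [opNorm_eq, opNorm_eq, opNorm_eq, map_add]; exact norm_add_le _ _

lemma opNorm_one {n : ℕ} (hn : 1 ≤ n) : opNorm (1 : Matrix (Fin n) (Fin n) ℝ) = 1 := by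
  haveI : Nonempty (Fin n) := Fin.pos_iff_nonempty.mp hn
  rw [opNorm_eq]
  have : matE n 1 = ContinuousLinearMap.id ℝ (EuclideanSpace ℝ (Fin n)) := by
    ext v i
    simp [matE_apply, Matrix.one_mulVec]
  rw [this, ContinuousLinearMap.norm_id]

lemma isSymm_smul_one {n : ℕ} (c : ℝ) : (c • (1 : Matrix (Fin n) (Fin n) ℝ)).IsSymm := by
  simp [Matrix.IsSymm, Matrix.transpose_smul]

lemma F_lip {n : ℕ} (hn : 1 ≤ n) {lam Lam : ℝ} (hlam : 0 < lam) (hlL : lam ≤ Lam)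
    {F : Matrix (Fin n) (Fin n) ℝ → ℝ}
    (hellip : ∀ M N : Matrix (Fin n) (Fin n) ℝ, M.IsSymm → N.IsSymm → N.PosSemidef →
      lam * opNorm N ≤ F (M + N) - F M ∧ F (M + N) - F M ≤ Lam * opNorm N)
    (M M' : Matrix (Fin n) (Fin n) ℝ) (hM : M.IsSymm) (hM' : M'.IsSymm) :
    |F M' - F M| ≤ 2 * Lam * opNorm (M' - M) := by
  set D := M' - M with hD
  have hDs : D.IsSymm := hM'.sub hM
  set c := opNorm D with hc
  have hc0 : 0 ≤ c := opNorm_nonneg' D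
  have hN1s : (D + c • 1).IsSymm := hDs.add (isSymm_smul_one c)
  have hN1psd : (D + c • 1).PosSemidef := psd_add_opNorm_one hDs
  have hN2psd : ((c • 1 : Matrix (Fin n) (Fin n) ℝ)).PosSemidef := psd_smul_one hc0
  have key : M + (D + c • 1) = M' + c • 1 := by rw [hD]; abel
  have h1 := hellip M (D + c • 1) hM hN1s hN1psd
  have h2 := hellip M' (c • 1) hM' (isSymm_smul_one c) hN2psd
  rw [key] at h1
  have hcc : opNorm ((c • 1 : Matrix (Fin n) (Fin n) ℝ)) = c := by
    rw [opNorm_smul, opNorm_one hn, abs_of_nonneg hc0, mul_one]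
  rw [hcc] at h2
  have hn1 : opNorm (D + c • 1) ≤ 2 * c := by
    calc opNorm (D + c • 1) ≤ opNorm D + opNorm (c • 1) := opNorm_add_le _ _
      _ = 2 * c := by rw [hcc, ← hc]; ring
  have hn1' : 0 ≤ opNorm (D + c • 1) := opNorm_nonneg' _
  have hLam : 0 ≤ Lam := le_trans hlam.le hlL
  have hLc : 0 ≤ Lam * c := mul_nonneg hLam hc0
  have hlc : 0 ≤ lam * c := mul_nonneg hlam.le hc0
  have hl1 : 0 ≤ lam * opNorm (D + c • 1) := mul_nonneg hlam.le hn1'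
  have hup : Lam * opNorm (D + c • 1) ≤ Lam * (2 * c) := by
    exact mul_le_mul_of_nonneg_left hn1 hLam
  rw [abs_le]
  constructor <;> [linarith [h1.1, h2.2]; linarith [h1.2, h2.1]]

attribute [local instance] Matrix.normedAddCommGroup Matrix.normedSpace

lemma isSymm_smul {n : ℕ} (c : ℝ) (X : Matrix (Fin n) (Fin n) ℝ) (h : X.IsSymm) :
    (c • X).IsSymm := by
  rw [Matrix.IsSymm, Matrix.transpose_smul, h]

lemma norm_equiv (n : ℕ) : ∃ C : ℝ, 1 ≤ C ∧ ∀ X : Matrix (Fin n) (Fin n) ℝ,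
    opNorm X ≤ C * ‖X‖ ∧ ‖X‖ ≤ C * opNorm X := by
  let e := (matE n).toContinuousLinearEquiv
  letI : Norm (Matrix (Fin n) (Fin n) ℝ →L[ℝ]
      (EuclideanSpace ℝ (Fin n) →L[ℝ] EuclideanSpace ℝ (Fin n))) := ContinuousLinearMap.hasOpNorm
  letI : Norm ((EuclideanSpace ℝ (Fin n) →L[ℝ] EuclideanSpace ℝ (Fin n)) →L[ℝ]
      Matrix (Fin n) (Fin n) ℝ) := ContinuousLinearMap.hasOpNorm
  set a := ‖(e : Matrix (Fin n) (Fin n) ℝ →L[ℝ]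
    (EuclideanSpace ℝ (Fin n) →L[ℝ] EuclideanSpace ℝ (Fin n)))‖ with ha
  set b := ‖(e.symm : (EuclideanSpace ℝ (Fin n) →L[ℝ] EuclideanSpace ℝ (Fin n)) →L[ℝ]
    Matrix (Fin n) (Fin n) ℝ)‖ with hb
  refine ⟨max 1 (max a b), le_max_left _ _, fun X => ?_⟩
  have ha0 : 0 ≤ a := ha ▸ ContinuousLinearMap.opNorm_nonneg _
  have hb0 : 0 ≤ b := hb ▸ ContinuousLinearMap.opNorm_nonneg _
  have h1 : opNorm X ≤ a * ‖X‖ := by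
    rw [opNorm_eq]
    exact (e : Matrix (Fin n) (Fin n) ℝ →L[ℝ]
      (EuclideanSpace ℝ (Fin n) →L[ℝ] EuclideanSpace ℝ (Fin n))).le_opNorm X
  have h2 : ‖X‖ ≤ b * ‖matE n X‖ := by
    have : X = e.symm (e X) := by simp
    calc ‖X‖ = ‖e.symm (e X)‖ := by rw [← this]
      _ ≤ b * ‖e X‖ := (e.symm : (EuclideanSpace ℝ (Fin n) →L[ℝ] EuclideanSpace ℝ (Fin n)) →L[ℝ]
        Matrix (Fin n) (Fin n) ℝ).le_opNorm _
      _ = b * ‖matE n X‖ := rfl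
  constructor
  · calc opNorm X ≤ a * ‖X‖ := h1
      _ ≤ max 1 (max a b) * ‖X‖ := by
          apply mul_le_mul_of_nonneg_right _ (norm_nonneg X)
          exact le_max_of_le_right (le_max_left _ _)
  · calc ‖X‖ ≤ b * ‖matE n X‖ := h2
      _ = b * opNorm X := by rw [opNorm_eq]
      _ ≤ max 1 (max a b) * opNorm X := by
          apply mul_le_mul_of_nonneg_right _ (norm_nonneg _)
          exact le_max_of_le_right (le_max_right _ _)

/-- Let `F : Sym(n) → ℝ` satisfy `F(0) = 0` and the uniform ellipticity
condition `λ‖N‖ ≤ F(M+N) − F(M) ≤ Λ‖N‖` for all symmetric `M` and positive semidefinite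
symmetric `N`. If the recession limit `F♯(X) = lim_{τ→0⁺} τ F(τ⁻¹ X)` exists for every
symmetric `X`, then for every `ε > 0` there exists `τ₀ > 0` such that
`|τ F(τ⁻¹X) − F♯(X)| ≤ ε (1 + ‖X‖)` for all `τ ∈ (0,τ₀)` and all symmetric `X`. -/
theorem statement0 (n : ℕ) (hn : 1 ≤ n) (lam Lam : ℝ) (hlam : 0 < lam) (hlL : lam ≤ Lam)
    (F : Matrix (Fin n) (Fin n) ℝ → ℝ) (hF0 : F 0 = 0)
    (hellip : ∀ M N : Matrix (Fin n) (Fin n) ℝ, M.IsSymm → N.IsSymm → N.PosSemidef →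
      lam * opNorm N ≤ F (M + N) - F M ∧ F (M + N) - F M ≤ Lam * opNorm N)
    (Fsharp : Matrix (Fin n) (Fin n) ℝ → ℝ)
    (hFs : ∀ X : Matrix (Fin n) (Fin n) ℝ, X.IsSymm →
      Tendsto (fun τ : ℝ => τ * F (τ⁻¹ • X)) (nhdsWithin 0 (Set.Ioi 0)) (nhds (Fsharp X))) :
    ∀ ε : ℝ, 0 < ε → ∃ τ₀ : ℝ, 0 < τ₀ ∧ ∀ τ : ℝ, 0 < τ → τ < τ₀ →
      ∀ X : Matrix (Fin n) (Fin n) ℝ, X.IsSymm →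
        |τ * F (τ⁻¹ • X) - Fsharp X| ≤ ε * (1 + opNorm X) := by
  intro ε hε
  obtain ⟨C, hC1, hC⟩ := norm_equiv n
  have hC0 : 0 ≤ C := le_trans zero_le_one hC1
  have hLam : 0 ≤ Lam := hlam.le.trans hlL
  -- Lipschitz estimate for the rescaled functions
  have hGlip : ∀ τ : ℝ, 0 < τ → ∀ X Y : Matrix (Fin n) (Fin n) ℝ, X.IsSymm → Y.IsSymm →
      |τ * F (τ⁻¹ • X) - τ * F (τ⁻¹ • Y)| ≤ 2 * Lam * opNorm (X - Y) := by
    intro τ hτ X Y hX hY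
    have hXs : (τ⁻¹ • X).IsSymm := isSymm_smul _ _ hX
    have hYs : (τ⁻¹ • Y).IsSymm := isSymm_smul _ _ hY
    have hlip := F_lip hn hlam hlL hellip (τ⁻¹ • Y) (τ⁻¹ • X) hYs hXs
    have heq : opNorm (τ⁻¹ • X - τ⁻¹ • Y) = τ⁻¹ * opNorm (X - Y) := by
      rw [← smul_sub, opNorm_smul, abs_of_pos (inv_pos.2 hτ)]
    calc |τ * F (τ⁻¹ • X) - τ * F (τ⁻¹ • Y)| = τ * |F (τ⁻¹ • X) - F (τ⁻¹ • Y)| := by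
          rw [← mul_sub, abs_mul, abs_of_pos hτ]
      _ ≤ τ * (2 * Lam * opNorm (τ⁻¹ • X - τ⁻¹ • Y)) := by
          apply mul_le_mul_of_nonneg_left hlip hτ.le
      _ = 2 * Lam * opNorm (X - Y) := by
          rw [heq]; field_simp
  -- Lipschitz estimate for Fsharp
  have hFsLip : ∀ X Y : Matrix (Fin n) (Fin n) ℝ, X.IsSymm → Y.IsSymm →
      |Fsharp X - Fsharp Y| ≤ 2 * Lam * opNorm (X - Y) := by
    intro X Y hX hY
    have hT : Tendsto (fun τ : ℝ => |τ * F (τ⁻¹ • X) - τ * F (τ⁻¹ • Y)|)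
        (nhdsWithin 0 (Set.Ioi 0)) (nhds |Fsharp X - Fsharp Y|) := ((hFs X hX).sub (hFs Y hY)).abs
    refine le_of_tendsto hT ?_
    filter_upwards [self_mem_nhdsWithin] with τ hτ
    exact hGlip τ hτ X Y hX hY
  -- positive homogeneity of Fsharp
  have hFsHom : ∀ s : ℝ, 0 < s → ∀ X : Matrix (Fin n) (Fin n) ℝ, X.IsSymm →
      Fsharp (s • X) = s * Fsharp X := by
    intro s hs X hX
    have hmap : Tendsto (fun τ : ℝ => τ / s) (nhdsWithin 0 (Set.Ioi 0))
        (nhdsWithin 0 (Set.Ioi 0)) := by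
      rw [tendsto_nhdsWithin_iff]
      constructor
      · have h : Tendsto (fun τ : ℝ => τ / s) (nhds 0) (nhds (0 / s)) :=
          (tendsto_id (α := ℝ)).div_const s
        rw [zero_div] at h
        exact h.mono_left (nhdsWithin_le_nhds (s := Set.Ioi 0))
      · filter_upwards [self_mem_nhdsWithin] with τ hτ
        exact Set.mem_Ioi.2 (div_pos hτ hs)
    have h1 : Tendsto (fun τ : ℝ => (τ / s) * F ((τ / s)⁻¹ • X))
        (nhdsWithin 0 (Set.Ioi 0)) (nhds (Fsharp X)) := (hFs X hX).comp hmap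
    have h2 : Tendsto (fun τ : ℝ => τ * F (τ⁻¹ • (s • X)))
        (nhdsWithin 0 (Set.Ioi 0)) (nhds (s * Fsharp X)) := by
      refine (h1.const_mul s).congr (fun τ => ?_)
      have hss : s ≠ 0 := hs.ne'
      have e1 : (τ / s)⁻¹ • X = τ⁻¹ • (s • X) := by
        rw [smul_smul, inv_div, div_eq_mul_inv, mul_comm]
      rw [← e1, ← mul_assoc, mul_div_cancel₀ _ hss]
    exact tendsto_nhds_unique (hFs (s • X) (isSymm_smul _ _ hX)) h2
  -- the uniform estimate on the unit ball of opNorm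
  obtain ⟨τ₀, hτ₀, hnet⟩ : ∃ τ₀ : ℝ, 0 < τ₀ ∧ ∀ τ : ℝ, 0 < τ → τ < τ₀ →
      ∀ Y : Matrix (Fin n) (Fin n) ℝ, Y.IsSymm → opNorm Y ≤ 1 →
      |τ * F (τ⁻¹ • Y) - Fsharp Y| ≤ ε := by
    set K : Set (Matrix (Fin n) (Fin n) ℝ) :=
      {Y | Y.IsSymm} ∩ Metric.closedBall 0 C with hK
    have hKc : IsCompact K := by
      apply Metric.isCompact_of_isClosed_isBounded
      · refine IsClosed.inter ?_ Metric.isClosed_closedBall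
        exact isClosed_eq (continuous_id.matrix_transpose) continuous_id
      · exact Metric.isBounded_closedBall.subset Set.inter_subset_right
    set A := 2 * Lam * C with hA
    have hA0 : 0 ≤ A := by positivity
    set δ := ε / (3 * (A + 1)) with hδdef
    have hδ : 0 < δ := by positivity
    have hcover : K ⊆ ⋃ x ∈ K, Metric.ball x δ := fun x hx =>
      Set.mem_biUnion hx (Metric.mem_ball_self hδ)
    obtain ⟨t, htK, htfin, htcov⟩ :=
      hKc.elim_finite_subcover_image (fun x _ => Metric.isOpen_ball) hcover
    have hpt : ∀ x ∈ t, ∃ d : ℝ, 0 < d ∧ ∀ τ : ℝ, 0 < τ → τ < d →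
        |τ * F (τ⁻¹ • x) - Fsharp x| < ε / 3 := by
      intro x hx
      have hxK := htK hx
      have h := hFs x hxK.1
      rw [Metric.tendsto_nhdsWithin_nhds] at h
      obtain ⟨d, hd, hdd⟩ := h (ε / 3) (by linarith)
      refine ⟨d, hd, fun τ h1 h2 => ?_⟩
      have := hdd (Set.mem_Ioi.2 h1) (by simpa [Real.dist_eq, abs_of_pos h1] using h2)
      simpa [Real.dist_eq] using this
    choose! d hd0 hdprop using hpt
    classical
    have hmin : ∃ τ₀ : ℝ, 0 < τ₀ ∧ ∀ x ∈ t, τ₀ ≤ d x := by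
      refine ⟨(insert (1:ℝ) (htfin.toFinset.image d)).min' ⟨1, Finset.mem_insert_self _ _⟩, ?_, ?_⟩
      · have hmem := Finset.min'_mem (insert (1:ℝ) (htfin.toFinset.image d))
          ⟨1, Finset.mem_insert_self _ _⟩
        rcases Finset.mem_insert.mp hmem with h | h
        · rw [h]; exact one_pos
        · obtain ⟨x, hx, hxd⟩ := Finset.mem_image.mp h
          rw [← hxd]; exact hd0 x (htfin.mem_toFinset.mp hx)
      · intro x hx
        exact Finset.min'_le _ _ (Finset.mem_insert_of_mem
          (Finset.mem_image_of_mem d (htfin.mem_toFinset.mpr hx)))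
    obtain ⟨τ₀, hτ₀p, hτ₀le⟩ := hmin
    refine ⟨τ₀, hτ₀p, ?_⟩
    intro τ hτ hττ₀ Y hYsym hYnorm
    have hYK : Y ∈ K := by
      refine ⟨hYsym, Metric.mem_closedBall.2 ?_⟩
      rw [dist_zero_right]
      calc ‖Y‖ ≤ C * opNorm Y := (hC Y).2
        _ ≤ C * 1 := mul_le_mul_of_nonneg_left hYnorm hC0
        _ = C := mul_one C
    obtain ⟨x, hx, hxY⟩ := Set.mem_iUnion₂.mp (htcov hYK)
    have hxK := htK hx
    have hdist : ‖Y - x‖ < δ := by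
      rw [← dist_eq_norm]; exact Metric.mem_ball.mp hxY
    have hop : opNorm (Y - x) ≤ C * δ := by
      calc opNorm (Y - x) ≤ C * ‖Y - x‖ := (hC _).1
        _ ≤ C * δ := mul_le_mul_of_nonneg_left hdist.le hC0
    have hop' : opNorm (x - Y) ≤ C * δ := by
      have hxy : x - Y = (-1 : ℝ) • (Y - x) := by simp
      rw [hxy, opNorm_smul]
      simpa using hop
    have e1 : |τ * F (τ⁻¹ • Y) - τ * F (τ⁻¹ • x)| ≤ 2 * Lam * (C * δ) := by
      refine le_trans (hGlip τ hτ Y x hYsym hxK.1) ?_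
      exact mul_le_mul_of_nonneg_left hop (by positivity)
    have e2 : |τ * F (τ⁻¹ • x) - Fsharp x| < ε / 3 :=
      hdprop x hx τ hτ (hττ₀.trans_le (hτ₀le x hx))
    have e3 : |Fsharp x - Fsharp Y| ≤ 2 * Lam * (C * δ) :=
      le_trans (hFsLip x Y hxK.1 hYsym) (mul_le_mul_of_nonneg_left hop' (by positivity))
    have hAδ : 2 * Lam * (C * δ) ≤ ε / 3 := by
      have h1 : 2 * Lam * (C * δ) = A * δ := by rw [hA]; ring
      have h2 : (A + 1) * δ = ε / 3 := by
        rw [hδdef]; field_simp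
      nlinarith [hδ.le]
    have tri := abs_sub_le (τ * F (τ⁻¹ • Y)) (τ * F (τ⁻¹ • x)) (Fsharp Y)
    have tri2 := abs_sub_le (τ * F (τ⁻¹ • x)) (Fsharp x) (Fsharp Y)
    linarith
  -- conclusion
  refine ⟨τ₀, hτ₀, ?_⟩
  intro τ hτ hττ₀ X hX
  by_cases hXn : opNorm X ≤ 1
  · have h := hnet τ hτ hττ₀ X hX hXn
    have h0 : 0 ≤ opNorm X := opNorm_nonneg' X
    nlinarith
  · push_neg at hXn
    set s := opNorm X with hs
    have hs1 : 1 < s := hXn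
    have hs0 : 0 < s := lt_trans one_pos hs1
    set Y := s⁻¹ • X with hY
    have hYs : Y.IsSymm := isSymm_smul _ _ hX
    have hYn : opNorm Y = 1 := by
      rw [hY, opNorm_smul, abs_of_pos (inv_pos.2 hs0), ← hs, inv_mul_cancel₀ hs0.ne']
    have hXY : X = s • Y := by
      rw [hY, smul_smul, mul_inv_cancel₀ hs0.ne', one_smul]
    have hGeq : τ * F (τ⁻¹ • X) = s * ((τ / s) * F ((τ / s)⁻¹ • Y)) := by
      have e1 : (τ / s)⁻¹ • Y = τ⁻¹ • X := by
        rw [hY, smul_smul, inv_div, div_eq_mul_inv, mul_comm s τ⁻¹, mul_assoc,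
          mul_inv_cancel₀ hs0.ne', mul_one]
      rw [e1, ← mul_assoc, mul_div_cancel₀ _ hs0.ne']
    have hFX : Fsharp X = s * Fsharp Y := by
      rw [hXY] at hX ⊢
      exact hFsHom s hs0 Y hYs
    have hτs : 0 < τ / s := div_pos hτ hs0
    have hτs' : τ / s < τ₀ := lt_of_le_of_lt (div_le_self hτ.le hs1.le) hττ₀
    have h := hnet (τ / s) hτs hτs' Y hYs hYn.le
    have key : |τ * F (τ⁻¹ • X) - Fsharp X| = s * |(τ / s) * F ((τ / s)⁻¹ • Y) - Fsharp Y| := by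
      rw [hGeq, hFX, ← mul_sub, abs_mul, abs_of_pos hs0]
    rw [key]
    have h0 : 0 ≤ opNorm X := opNorm_nonneg' X
    calc s * |(τ / s) * F ((τ / s)⁻¹ • Y) - Fsharp Y| ≤ s * ε :=
        mul_le_mul_of_nonneg_left h hs0.le
      _ ≤ ε * (1 + opNorm X) := by rw [← hs]; nlinarith
end

section
/- Let (a_k)_{k≥0}, (b_k)_{k≥0} and (c_k)_{k≥0} be sequences of nonnegative real numbers, let ε₀ ∈ (0,1) and K₀ ≥ 1 satisfy K₀·ε₀ < 1, and assume c_k ≤ K₀^{k−i}·c_i for all integers 0 ≤ i ≤ k. If a_k ≤ ε₀^k·a₀ + Σ_{i=0}^{k−1} ε₀^{k−i}·b_i for every k ≥ 1, then Σ_{k=1}^{∞} c_k·a_k ≤ (K₀ε₀/(1 − K₀ε₀))·(c₀·a₀ + Σ_{i=0}^{∞} c_i·b_i); in particular, the series Σ_{k=1}^{∞} c_k·a_k converges whenever Σ_{i=0}^{∞} c_i·b_i converges. -/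
open scoped NNReal ENNReal

/-- Iteration lemma for nonnegative sequences: if
`a k ≤ ε₀^k a₀ + ∑_{i<k} ε₀^{k-i} b i` and `c k ≤ K₀^{k-i} c i`, with `0 < ε₀ < 1 ≤ K₀`
and `K₀ ε₀ < 1`, then `∑_{k≥1} c k * a k ≤ (K₀ε₀/(1-K₀ε₀)) (c₀ a₀ + ∑ c i * b i)`
(sums taken in `[0,∞]`); in particular the series on the left converges whenever
`∑ c i * b i` does. -/
theorem statement5 (a b c : ℕ → ℝ≥0) (ε₀ K₀ : ℝ≥0)
    (hε₀ : 0 < ε₀) (hε₁ : ε₀ < 1) (hK₀ : 1 ≤ K₀) (hKε : K₀ * ε₀ < 1)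
    (hc : ∀ i k : ℕ, i ≤ k → c k ≤ K₀ ^ (k - i) * c i)
    (ha : ∀ k : ℕ, 1 ≤ k →
      a k ≤ ε₀ ^ k * a 0 + ∑ i ∈ Finset.range k, ε₀ ^ (k - i) * b i) :
    (∑' k : ℕ, ((c (k + 1) : ℝ≥0∞) * (a (k + 1) : ℝ≥0∞))) ≤
        ((K₀ * ε₀ / (1 - K₀ * ε₀) : ℝ≥0) : ℝ≥0∞) *
          ((c 0 : ℝ≥0∞) * (a 0 : ℝ≥0∞) + ∑' i : ℕ, ((c i : ℝ≥0∞) * (b i : ℝ≥0∞))) ∧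
      ((∑' i : ℕ, ((c i : ℝ≥0∞) * (b i : ℝ≥0∞))) < ⊤ →
        (∑' k : ℕ, ((c (k + 1) : ℝ≥0∞) * (a (k + 1) : ℝ≥0∞))) < ⊤) := by
  set q : ℝ≥0∞ := ((K₀ * ε₀ : ℝ≥0) : ℝ≥0∞) with hq
  set A : ℕ → ℝ≥0∞ := fun i => (c i : ℝ≥0∞) * (b i : ℝ≥0∞) with hA
  -- the constant
  have hconst : ((K₀ * ε₀ / (1 - K₀ * ε₀) : ℝ≥0) : ℝ≥0∞) = q * (1 - q)⁻¹ := by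
    have h1 : (1 - K₀ * ε₀ : ℝ≥0) ≠ 0 := by
      simp [tsub_eq_zero_iff_le, not_le, hKε]
    rw [div_eq_mul_inv, ENNReal.coe_mul, ENNReal.coe_inv h1, hq, ENNReal.coe_sub, ENNReal.coe_one]
  -- pointwise bound
  have key : ∀ k : ℕ, (c (k + 1) : ℝ≥0∞) * (a (k + 1) : ℝ≥0∞) ≤
      q ^ (k + 1) * ((c 0 : ℝ≥0∞) * (a 0 : ℝ≥0∞)) +
        ∑ i ∈ Finset.range (k + 1), q ^ (k + 1 - i) * A i := by
    intro k
    have ha' : (a (k + 1) : ℝ≥0∞) ≤ (ε₀ : ℝ≥0∞) ^ (k + 1) * (a 0 : ℝ≥0∞) +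
        ∑ i ∈ Finset.range (k + 1), (ε₀ : ℝ≥0∞) ^ (k + 1 - i) * (b i : ℝ≥0∞) := by
      have := ha (k + 1) (Nat.le_add_left 1 k)
      exact_mod_cast this
    have h1 : (c (k + 1) : ℝ≥0∞) * ((ε₀ : ℝ≥0∞) ^ (k + 1) * (a 0 : ℝ≥0∞)) ≤
        q ^ (k + 1) * ((c 0 : ℝ≥0∞) * (a 0 : ℝ≥0∞)) := by
      have h0 : (c (k + 1) : ℝ≥0∞) ≤ (K₀ : ℝ≥0∞) ^ (k + 1) * (c 0 : ℝ≥0∞) := by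
        have := hc 0 (k + 1) (Nat.zero_le _)
        exact_mod_cast this
      calc (c (k + 1) : ℝ≥0∞) * ((ε₀ : ℝ≥0∞) ^ (k + 1) * (a 0 : ℝ≥0∞))
          ≤ ((K₀ : ℝ≥0∞) ^ (k + 1) * (c 0 : ℝ≥0∞)) * ((ε₀ : ℝ≥0∞) ^ (k + 1) * (a 0 : ℝ≥0∞)) :=
            mul_le_mul_left h0 _
        _ = q ^ (k + 1) * ((c 0 : ℝ≥0∞) * (a 0 : ℝ≥0∞)) := by
            rw [hq]; push_cast; ring
    have h2 : ∀ i ∈ Finset.range (k + 1),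
        (c (k + 1) : ℝ≥0∞) * ((ε₀ : ℝ≥0∞) ^ (k + 1 - i) * (b i : ℝ≥0∞)) ≤
          q ^ (k + 1 - i) * A i := by
      intro i hi
      have h0 : (c (k + 1) : ℝ≥0∞) ≤ (K₀ : ℝ≥0∞) ^ (k + 1 - i) * (c i : ℝ≥0∞) := by
        have := hc i (k + 1) (le_of_lt (Finset.mem_range.mp hi))
        exact_mod_cast this
      calc (c (k + 1) : ℝ≥0∞) * ((ε₀ : ℝ≥0∞) ^ (k + 1 - i) * (b i : ℝ≥0∞))
          ≤ ((K₀ : ℝ≥0∞) ^ (k + 1 - i) * (c i : ℝ≥0∞)) *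
              ((ε₀ : ℝ≥0∞) ^ (k + 1 - i) * (b i : ℝ≥0∞)) := mul_le_mul_left h0 _
        _ = q ^ (k + 1 - i) * A i := by
            rw [hq, hA]; push_cast; ring
    calc (c (k + 1) : ℝ≥0∞) * (a (k + 1) : ℝ≥0∞)
        ≤ (c (k + 1) : ℝ≥0∞) * ((ε₀ : ℝ≥0∞) ^ (k + 1) * (a 0 : ℝ≥0∞) +
            ∑ i ∈ Finset.range (k + 1), (ε₀ : ℝ≥0∞) ^ (k + 1 - i) * (b i : ℝ≥0∞)) :=
          mul_le_mul_right ha' _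
      _ = (c (k + 1) : ℝ≥0∞) * ((ε₀ : ℝ≥0∞) ^ (k + 1) * (a 0 : ℝ≥0∞)) +
            ∑ i ∈ Finset.range (k + 1),
              (c (k + 1) : ℝ≥0∞) * ((ε₀ : ℝ≥0∞) ^ (k + 1 - i) * (b i : ℝ≥0∞)) := by
          rw [mul_add, Finset.mul_sum]
      _ ≤ q ^ (k + 1) * ((c 0 : ℝ≥0∞) * (a 0 : ℝ≥0∞)) +
            ∑ i ∈ Finset.range (k + 1), q ^ (k + 1 - i) * A i :=
          add_le_add h1 (Finset.sum_le_sum h2)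
  -- geometric sum
  have hgeo : (∑' n : ℕ, q ^ (n + 1)) = q * (1 - q)⁻¹ := by
    simp_rw [pow_succ']
    rw [ENNReal.tsum_mul_left, ENNReal.tsum_geometric]
  -- the double sum, with indicator
  set g : ℕ → ℕ → ℝ≥0∞ := fun k i => if i ≤ k then q ^ (k + 1 - i) * A i else 0 with hg
  have hinner : ∀ k : ℕ, (∑' i : ℕ, g k i) =
      ∑ i ∈ Finset.range (k + 1), q ^ (k + 1 - i) * A i := by
    intro k
    rw [tsum_eq_sum (s := Finset.range (k + 1))
      (fun i hi => by
        simp only [hg]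
        rw [if_neg]
        intro h
        exact hi (Finset.mem_range.mpr (Nat.lt_succ_of_le h)))]
    refine Finset.sum_congr rfl fun i hi => ?_
    simp only [hg]
    rw [if_pos (Nat.lt_succ_iff.mp (Finset.mem_range.mp hi))]
  have hcol : ∀ i : ℕ, (∑' k : ℕ, g k i) = q * (1 - q)⁻¹ * A i := by
    intro i
    have hsplit := Summable.sum_add_tsum_nat_add' (f := fun k => g k i) (k := i) ENNReal.summable
    have h0 : (∑ k ∈ Finset.range i, g k i) = 0 := by
      refine Finset.sum_eq_zero fun k hk => ?_
      simp only [hg]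
      rw [if_neg]
      exact fun h => absurd (Finset.mem_range.mp hk) (not_lt.mpr h)
    have h1 : ∀ n : ℕ, g (n + i) i = q ^ (n + 1) * A i := by
      intro n
      simp only [hg]
      rw [if_pos (Nat.le_add_left i n)]
      congr 2
      omega
    rw [← hsplit, h0, zero_add]
    simp_rw [h1]
    rw [ENNReal.tsum_mul_right, hgeo]
  have hC0 : (∑' k : ℕ, q ^ (k + 1) * ((c 0 : ℝ≥0∞) * (a 0 : ℝ≥0∞))) =
      q * (1 - q)⁻¹ * ((c 0 : ℝ≥0∞) * (a 0 : ℝ≥0∞)) := by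
    rw [ENNReal.tsum_mul_right, hgeo]
  have main : (∑' k : ℕ, ((c (k + 1) : ℝ≥0∞) * (a (k + 1) : ℝ≥0∞))) ≤
      ((K₀ * ε₀ / (1 - K₀ * ε₀) : ℝ≥0) : ℝ≥0∞) *
        ((c 0 : ℝ≥0∞) * (a 0 : ℝ≥0∞) + ∑' i : ℕ, A i) := by
    calc (∑' k : ℕ, ((c (k + 1) : ℝ≥0∞) * (a (k + 1) : ℝ≥0∞)))
        ≤ ∑' k : ℕ, (q ^ (k + 1) * ((c 0 : ℝ≥0∞) * (a 0 : ℝ≥0∞)) +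
            ∑ i ∈ Finset.range (k + 1), q ^ (k + 1 - i) * A i) :=
          ENNReal.tsum_le_tsum key
      _ = (∑' k : ℕ, q ^ (k + 1) * ((c 0 : ℝ≥0∞) * (a 0 : ℝ≥0∞))) +
            ∑' k : ℕ, ∑' i : ℕ, g k i := by
          rw [ENNReal.tsum_add]
          congr 1
          exact tsum_congr fun k => (hinner k).symm
      _ = q * (1 - q)⁻¹ * ((c 0 : ℝ≥0∞) * (a 0 : ℝ≥0∞)) + ∑' i : ℕ, ∑' k : ℕ, g k i := by
          rw [hC0, ENNReal.tsum_comm]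
      _ = q * (1 - q)⁻¹ * ((c 0 : ℝ≥0∞) * (a 0 : ℝ≥0∞)) +
            q * (1 - q)⁻¹ * ∑' i : ℕ, A i := by
          congr 1
          simp_rw [hcol]
          rw [ENNReal.tsum_mul_left]
      _ = ((K₀ * ε₀ / (1 - K₀ * ε₀) : ℝ≥0) : ℝ≥0∞) *
            ((c 0 : ℝ≥0∞) * (a 0 : ℝ≥0∞) + ∑' i : ℕ, A i) := by
          rw [hconst, mul_add]
  refine ⟨main, fun hfin => ?_⟩
  refine lt_of_le_of_lt main ?_
  apply ENNReal.mul_lt_top ENNReal.coe_lt_top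
  exact ENNReal.add_lt_top.mpr ⟨ENNReal.mul_lt_top ENNReal.coe_lt_top ENNReal.coe_lt_top, hfin⟩
end
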